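/- arXiv:2007.00247 — 3 statements merged into one kernel-verified Lean document; each statement's English description precedes it below -/
import Mathlib

section
/- In the pilot-plant worst-case problem, the optimal value equals min{2ρ, δ + ρ + γ̃(p^max − p^min)}: specifically, the cost of the no-pilot-plant policy (x = 0, build two current-design plants) is 2ρ, the worst-case cost of the pilot-plant policy with redesign recourse is δ + ρ + γ̃(p^max − p^min), and no feasible policy achieves a lower worst-case cost. -/
/-- The pilot-plant uncertainty set over `(p, q, γ)`. -/
def pilotXi (pmin pmax α β Δ qmin qmax ρ γt x : ℝ) : Set (ℝ × ℝ × ℝ) :=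
  {v : ℝ × ℝ × ℝ | 0 ≤ v.1 ∧ 0 ≤ v.2.1 ∧
    pmin * x ≤ v.1 ∧ v.1 ≤ pmax * x ∧
    qmin * (1 - x) + (α - Δ) * x + β * v.1 ≤ v.2.1 ∧
    v.2.1 ≤ qmax * (1 - x) + (α + Δ) * x + β * v.1 ∧
    v.2.2 = (ρ + γt * pmax) * x - γt * v.1}

/-- Feasibility of a policy `(x, y, z₁, z₂)` in the pilot-plant problem:
binary values, redesign only with pilot plant, and demand satisfaction
for every realization; recourse depends only on the observation `x·p`. -/
def pilotFeasible (pmin pmax α β Δ qmin qmax ρ γt d : ℝ)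
    (x : ℝ) (y z1 z2 : ℝ → ℝ) : Prop :=
  (x = 0 ∨ x = 1) ∧
  (∀ v : ℝ, (y v = 0 ∨ y v = 1) ∧ (z1 v = 0 ∨ z1 v = 1) ∧ (z2 v = 0 ∨ z2 v = 1)) ∧
  ∀ w ∈ pilotXi pmin pmax α β Δ qmin qmax ρ γt x,
    y (x * w.1) ≤ x ∧
    d ≤ w.2.1 * (z1 (x * w.1) + z2 (x * w.1)) + d * y (x * w.1)

/-- Cost of a policy at realization `w = (p, q, γ)`. -/
def pilotCost (δ ρ x : ℝ) (y z1 z2 : ℝ → ℝ) (w : ℝ × ℝ × ℝ) : ℝ :=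
  δ * x + w.2.2 * y (x * w.1) + ρ * (z1 (x * w.1) + z2 (x * w.1))

/-- the optimal worst-case value of the pilot-plant problem is
`min {2ρ, δ + ρ + γ̃(pmax − pmin)}`: the no-pilot policy costs `2ρ`, the pilot
policy with redesign recourse has worst-case cost `δ + ρ + γ̃(pmax − pmin)`,
and no feasible policy has a smaller worst-case cost. -/
theorem stmt9
    (pmin pmax α β Δ qmin qmax ρ γt δ d phat : ℝ)
    (hρ : 0 < ρ) (hδ : 0 < δ) (hγt : 0 < γt)
    (hp0 : 0 < pmin) (hpp : pmin < pmax) (hβ : 0 < β) (hΔ : 0 < Δ)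
    (hqmin : qmin = α - Δ + β * pmin) (hqmax : qmax = α + Δ + β * pmax)
    (hd1 : qmin < d) (hd2 : d ≤ 2 * qmin)
    (hphat : phat < pmax) (hdphat : d = α - Δ + β * phat) :
    -- (i) the no-pilot policy is feasible with constant cost 2ρ
    (pilotFeasible pmin pmax α β Δ qmin qmax ρ γt d 0
        (fun _ => 0) (fun _ => 1) (fun _ => 1) ∧
      ∀ w ∈ pilotXi pmin pmax α β Δ qmin qmax ρ γt 0,
        pilotCost δ ρ 0 (fun _ => 0) (fun _ => 1) (fun _ => 1) w = 2 * ρ) ∧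
    -- (ii) a feasible pilot policy attains worst-case cost δ + ρ + γ̃(pmax − pmin)
    (∃ y z1 z2 : ℝ → ℝ,
      pilotFeasible pmin pmax α β Δ qmin qmax ρ γt d 1 y z1 z2 ∧
      (∀ w ∈ pilotXi pmin pmax α β Δ qmin qmax ρ γt 1,
        pilotCost δ ρ 1 y z1 z2 w ≤ δ + ρ + γt * (pmax - pmin)) ∧
      (∃ w ∈ pilotXi pmin pmax α β Δ qmin qmax ρ γt 1,
        pilotCost δ ρ 1 y z1 z2 w = δ + ρ + γt * (pmax - pmin))) ∧
    -- (iii) no feasible policy achieves a smaller worst case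
    (∀ x : ℝ, ∀ y z1 z2 : ℝ → ℝ,
      pilotFeasible pmin pmax α β Δ qmin qmax ρ γt d x y z1 z2 →
      ∃ w ∈ pilotXi pmin pmax α β Δ qmin qmax ρ γt x,
        min (2 * ρ) (δ + ρ + γt * (pmax - pmin)) ≤ pilotCost δ ρ x y z1 z2 w) := by
  have hqmin0 : 0 < qmin := by linarith
  refine ⟨⟨⟨Or.inl rfl, fun v => ⟨Or.inl rfl, Or.inr rfl, Or.inr rfl⟩, ?_⟩, ?_⟩, ?_, ?_⟩
  · -- (i) feasibility
    rintro ⟨p, q, g⟩ ⟨h1, h2, h3, h4, h5, h6, h7⟩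
    simp only [pilotXi, Set.mem_setOf_eq] at *
    refine ⟨by norm_num, ?_⟩
    show d ≤ q * (1 + 1) + d * 0
    nlinarith
  · -- (i) cost
    rintro ⟨p, q, g⟩ ⟨h1, h2, h3, h4, h5, h6, h7⟩
    simp [pilotCost]
    ring
  · -- (ii)
    refine ⟨fun _ => 1, fun _ => 0, fun _ => 0, ⟨Or.inr rfl,
      fun v => ⟨Or.inr rfl, Or.inl rfl, Or.inl rfl⟩, ?_⟩, ?_, ?_⟩
    · rintro ⟨p, q, g⟩ _
      constructor
      · exact le_refl _
      · simp
    · rintro ⟨p, q, g⟩ ⟨h1, h2, h3, h4, h5, h6, h7⟩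
      simp only at h7
      simp only [pilotCost]
      rw [h7]
      simp only at h3
      nlinarith
    · refine ⟨(pmin, qmin, ρ + γt * pmax - γt * pmin),
        ⟨le_of_lt hp0, le_of_lt hqmin0, by norm_num, by norm_num; linarith,
         by show qmin * (1-1) + (α - Δ) * 1 + β * pmin ≤ qmin; nlinarith,
         by show qmin ≤ qmax * (1-1) + (α + Δ) * 1 + β * pmin; nlinarith,
         by show ρ + γt * pmax - γt * pmin = (ρ + γt * pmax) * 1 - γt * pmin; ring⟩, ?_⟩
      simp [pilotCost]; ring
  · -- (iii)
    rintro x y z1 z2 ⟨hx, hbin, hfeas⟩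
    rcases hx with hx | hx
    · -- x = 0
      subst hx
      have hw : ((0 : ℝ), qmin, (0 : ℝ)) ∈ pilotXi pmin pmax α β Δ qmin qmax ρ γt 0 := by
        refine ⟨le_refl _, le_of_lt hqmin0, by norm_num, by norm_num,
          by show qmin * (1-0) + (α - Δ) * 0 + β * 0 ≤ qmin; nlinarith,
          by show qmin ≤ qmax * (1-0) + (α + Δ) * 0 + β * 0; nlinarith,
          by show (0:ℝ) = (ρ + γt * pmax) * 0 - γt * 0; ring⟩
      refine ⟨_, hw, ?_⟩
      obtain ⟨hy, hdem⟩ := hfeas _ hw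
      simp only at hy hdem
      obtain ⟨hyb, hz1b, hz2b⟩ := hbin (0 * 0)
      have hy0 : y (0 * 0) = 0 := by rcases hyb with h | h; exact h; linarith [hy, h]
      have hz1 : z1 (0 * 0) = 1 := by
        rcases hz1b with h | h
        · exfalso; rcases hz2b with h2 | h2 <;> rw [hy0, h] at hdem <;> nlinarith
        · exact h
      have hz2 : z2 (0 * 0) = 1 := by
        rcases hz2b with h | h
        · exfalso; rw [hy0, h, hz1] at hdem; nlinarith
        · exact h
      have : min (2 * ρ) (δ + ρ + γt * (pmax - pmin)) ≤ 2 * ρ := min_le_left _ _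
      show min _ _ ≤ δ * 0 + 0 * y (0 * 0) + ρ * (z1 (0 * 0) + z2 (0 * 0))
      rw [hy0, hz1, hz2]
      linarith
    · -- x = 1
      subst hx
      have hw : ((pmin : ℝ), qmin, ρ + γt * pmax - γt * pmin) ∈
          pilotXi pmin pmax α β Δ qmin qmax ρ γt 1 := by
        refine ⟨le_of_lt hp0, le_of_lt hqmin0, by norm_num, by norm_num; linarith,
          by show qmin * (1-1) + (α - Δ) * 1 + β * pmin ≤ qmin; nlinarith,
          by show qmin ≤ qmax * (1-1) + (α + Δ) * 1 + β * pmin; nlinarith,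
          by show ρ + γt * pmax - γt * pmin = (ρ + γt * pmax) * 1 - γt * pmin; ring⟩
      refine ⟨_, hw, ?_⟩
      obtain ⟨hy, hdem⟩ := hfeas _ hw
      simp only at hy hdem
      obtain ⟨hyb, hz1b, hz2b⟩ := hbin (1 * pmin)
      have hz1nn : 0 ≤ z1 (1 * pmin) := by rcases hz1b with h | h <;> rw [h] <;> norm_num
      have hz2nn : 0 ≤ z2 (1 * pmin) := by rcases hz2b with h | h <;> rw [h] <;> norm_num
      rcases hyb with hy0 | hy1
      · -- no redesign: need two plants
        have hz1 : z1 (1 * pmin) = 1 := by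
          rcases hz1b with h | h
          · exfalso; rcases hz2b with h2 | h2 <;> rw [hy0, h] at hdem <;> nlinarith
          · exact h
        have hz2 : z2 (1 * pmin) = 1 := by
          rcases hz2b with h | h
          · exfalso; rw [hy0, h, hz1] at hdem; nlinarith
          · exact h
        have : min (2 * ρ) (δ + ρ + γt * (pmax - pmin)) ≤ 2 * ρ := min_le_left _ _
        show min _ _ ≤ δ * 1 + (ρ + γt * pmax - γt * pmin) * y (1 * pmin) +
          ρ * (z1 (1 * pmin) + z2 (1 * pmin))
        rw [hy0, hz1, hz2]
        linarith
      · have : min (2 * ρ) (δ + ρ + γt * (pmax - pmin)) ≤ δ + ρ + γt * (pmax - pmin) :=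
          min_le_right _ _
        show min _ _ ≤ δ * 1 + (ρ + γt * pmax - γt * pmin) * y (1 * pmin) +
          ρ * (z1 (1 * pmin) + z2 (1 * pmin))
        rw [hy1]
        nlinarith [mul_nonneg (le_of_lt hρ) (add_nonneg hz1nn hz2nn)]
end

section
/- In the scenario-based pilot-plant problem, the optimal expected cost equals min{2ρ, δ + Σ_{s∈S₁} φ_s ρ + Σ_{s∈S₂} φ_s (ρ + γ̃(p^max − p̄_s)) + Σ_{s∈S₃} 2φ_s ρ}, where S₁ = {s : p̄_s ≥ p̂}, S₂ = {s : p̄_s < p̂ and γ̃(p^max − p̄_s) < ρ}, S₃ = {s : p̄_s < p̂ and γ̃(p^max − p̄_s) ≥ ρ}. -/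
set_option maxHeartbeats 1000000 in
/-- the optimal expected cost of the scenario-based pilot-plant
problem equals
`min {2ρ, δ + Σ_{S₁} φ_s ρ + Σ_{S₂} φ_s (ρ + γ̃(pmax − p̄_s)) + Σ_{S₃} 2φ_s ρ}`. -/
theorem stmt11
    (S : ℕ) (hS : 0 < S)
    (φ : Fin S → ℝ) (hφ0 : ∀ s, 0 ≤ φ s) (hφ1 : ∑ s, φ s = 1)
    (pmin pmax α β Δ qmin qmax ρ δ γt d phat : ℝ)
    (pbar : Fin S → ℝ) (hpbar : ∀ s, pbar s ∈ Set.Icc pmin pmax)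
    (hρ : 0 < ρ) (hδ : 0 < δ) (hγt : 0 < γt)
    (hβ : 0 < β) (hΔ : 0 < Δ) (hpp : pmin < pmax)
    (hphat1 : pmin < phat) (hphat2 : phat < pmax)
    (hqmin : qmin = α - Δ + β * pmin) (hqmax : qmax = α + Δ + β * pmax)
    (hdphat : d = α - Δ + β * phat) (hd1 : qmin < d) (hd2 : d ≤ 2 * qmin) :
    IsLeast
      {c : ℝ | ∃ (x : ℝ) (y z1 z2 : Fin S → ℝ),
        (x = 0 ∨ x = 1) ∧
        (∀ s, (y s = 0 ∨ y s = 1) ∧ (z1 s = 0 ∨ z1 s = 1) ∧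
              (z2 s = 0 ∨ z2 s = 1)) ∧
        (∀ s, y s ≤ x) ∧
        (x = 0 → ∀ s s', y s = y s' ∧ z1 s = z1 s' ∧ z2 s = z2 s') ∧
        (∀ s, ∀ q : ℝ,
          (if x = 1 then α + β * pbar s - Δ ≤ q ∧ q ≤ α + β * pbar s + Δ
           else qmin ≤ q ∧ q ≤ qmax) →
          d ≤ q * (z1 s + z2 s) + d * y s) ∧
        c = δ * x + ∑ s, φ s * ((ρ + γt * (pmax - pbar s)) * y s
              + ρ * (z1 s + z2 s))}
      (min (2 * ρ)
        (δ + ∑ s, φ s *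
          (if phat ≤ pbar s then ρ
           else if γt * (pmax - pbar s) < ρ then ρ + γt * (pmax - pbar s)
           else 2 * ρ))) := by
  have hq0 : 0 < qmin := by linarith
  have hd0 : 0 < d := lt_trans hq0 hd1
  have hqlo : ∀ s, qmin ≤ α + β * pbar s - Δ := fun s => by
    have h1 := (hpbar s).1
    nlinarith [mul_le_mul_of_nonneg_left h1 hβ.le]
  have hγnn : ∀ s, 0 ≤ γt * (pmax - pbar s) := fun s => by
    have h2 := (hpbar s).2
    nlinarith [mul_le_mul_of_nonneg_left h2 hγt.le]
  constructor
  · -- membership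
    rcases le_total (2 * ρ)
        (δ + ∑ s, φ s *
          (if phat ≤ pbar s then ρ
           else if γt * (pmax - pbar s) < ρ then ρ + γt * (pmax - pbar s)
           else 2 * ρ)) with h | h
    · rw [min_eq_left h]
      refine ⟨0, fun _ => 0, fun _ => 1, fun _ => 1, Or.inl rfl,
        fun s => ⟨Or.inl rfl, Or.inr rfl, Or.inr rfl⟩, fun s => le_refl 0,
        fun _ s s' => ⟨rfl, rfl, rfl⟩, ?_, ?_⟩
      · intro s q hq
        simp only [if_neg (by norm_num : (0:ℝ) ≠ 1)] at hq
        show d ≤ q * (1 + 1) + d * 0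
        linarith [hq.1]
      · have : ∀ s : Fin S, φ s * ((ρ + γt * (pmax - pbar s)) * 0 + ρ * (1 + 1))
            = φ s * (2 * ρ) := fun s => by ring
        rw [Finset.sum_congr rfl (fun s _ => this s), ← Finset.sum_mul, hφ1]
        ring
    · rw [min_eq_right h]
      refine ⟨1,
        fun s => if phat ≤ pbar s then 0 else if γt * (pmax - pbar s) < ρ then 1 else 0,
        fun s => if phat ≤ pbar s then 1 else if γt * (pmax - pbar s) < ρ then 0 else 1,
        fun s => if phat ≤ pbar s then 0 else if γt * (pmax - pbar s) < ρ then 0 else 1,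
        Or.inr rfl, ?_, ?_, ?_, ?_, ?_⟩
      · intro s
        by_cases h1 : phat ≤ pbar s <;> by_cases h2 : γt * (pmax - pbar s) < ρ <;>
          simp [h1, h2]
      · intro s
        by_cases h1 : phat ≤ pbar s <;> by_cases h2 : γt * (pmax - pbar s) < ρ <;>
          simp [h1, h2]
      · intro hx; exact absurd hx (by norm_num)
      · intro s q hq
        simp only [if_pos rfl] at hq
        have hql := hqlo s
        have hq1 := hq.1
        by_cases h1 : phat ≤ pbar s
        · simp only [if_pos h1]
          have : d ≤ α + β * pbar s - Δ := by
            rw [hdphat]; nlinarith [mul_le_mul_of_nonneg_left h1 hβ.le]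
          nlinarith
        · by_cases h2 : γt * (pmax - pbar s) < ρ
          · simp only [if_neg h1, if_pos h2]
            nlinarith
          · simp only [if_neg h1, if_neg h2]
            nlinarith
      · congr 1
        · ring
        · refine Finset.sum_congr rfl (fun s _ => ?_)
          by_cases h1 : phat ≤ pbar s
          · simp only [if_pos h1]; ring
          · by_cases h2 : γt * (pmax - pbar s) < ρ
            · simp only [if_neg h1, if_pos h2]; ring
            · simp only [if_neg h1, if_neg h2]; ring
  · -- lower bound
    rintro c ⟨x, y, z1, z2, hx, hbin, hyx, hsame, hcon, hc⟩
    rcases hx with hx | hx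
    · -- x = 0 : cost is 2ρ
      subst hx
      refine le_trans (min_le_left _ _) ?_
      have hy0 : ∀ s, y s = 0 := by
        intro s
        rcases (hbin s).1 with h | h
        · exact h
        · exfalso; have := hyx s; rw [h] at this; linarith
      have hz : ∀ s, z1 s + z2 s = 2 := by
        intro s
        have hcq := hcon s qmin (by
          simp only [if_neg (by norm_num : (0:ℝ) ≠ 1)]
          exact ⟨le_refl qmin, by rw [hqmin, hqmax]; nlinarith⟩)
        rw [hy0 s, mul_zero, add_zero] at hcq
        rcases (hbin s).2.1 with h1 | h1 <;> rcases (hbin s).2.2 with h2 | h2 <;>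
          rw [h1, h2] at hcq ⊢
        · exfalso; nlinarith
        · exfalso; nlinarith
        · exfalso; nlinarith
        · norm_num
      rw [hc]
      have heq : ∀ s : Fin S, φ s * ((ρ + γt * (pmax - pbar s)) * y s + ρ * (z1 s + z2 s))
          = φ s * (2 * ρ) := fun s => by rw [hy0 s, hz s]; ring
      rw [Finset.sum_congr rfl (fun s _ => heq s), ← Finset.sum_mul, hφ1]
      linarith
    · -- x = 1
      subst hx
      refine le_trans (min_le_right _ _) ?_
      rw [hc]
      have key : ∀ s : Fin S,
          (if phat ≤ pbar s then ρ
           else if γt * (pmax - pbar s) < ρ then ρ + γt * (pmax - pbar s)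
           else 2 * ρ)
          ≤ (ρ + γt * (pmax - pbar s)) * y s + ρ * (z1 s + z2 s) := by
        intro s
        have hcq := hcon s (α + β * pbar s - Δ) (by
          simp only [if_pos rfl]; constructor <;> linarith)
        have hql := hqlo s
        have hγs := hγnn s
        rcases (hbin s).1 with hy | hy
        · -- y s = 0
          rw [hy, mul_zero, add_zero] at hcq
          rw [hy]
          rcases (hbin s).2.1 with h1 | h1 <;> rcases (hbin s).2.2 with h2 | h2 <;>
            rw [h1, h2] at hcq ⊢
          · exfalso; nlinarith
          · -- z1=0, z2=1
            have hple : phat ≤ pbar s := by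
              rw [hdphat] at hcq
              have hb : β * phat ≤ β * pbar s := by nlinarith
              exact le_of_mul_le_mul_left hb hβ
            rw [if_pos hple]; linarith
          · -- z1=1, z2=0
            have hple : phat ≤ pbar s := by
              rw [hdphat] at hcq
              have hb : β * phat ≤ β * pbar s := by nlinarith
              exact le_of_mul_le_mul_left hb hβ
            rw [if_pos hple]; linarith
          · -- z1=z2=1 : cost 2ρ
            by_cases h1' : phat ≤ pbar s
            · rw [if_pos h1']; linarith
            · rw [if_neg h1']
              by_cases h2' : γt * (pmax - pbar s) < ρ
              · rw [if_pos h2']; linarith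
              · rw [if_neg h2']; linarith
        · -- y s = 1
          rw [hy]
          have hznn : 0 ≤ ρ * (z1 s + z2 s) := by
            rcases (hbin s).2.1 with h1 | h1 <;> rcases (hbin s).2.2 with h2 | h2 <;>
              rw [h1, h2] <;> nlinarith
          by_cases h1' : phat ≤ pbar s
          · rw [if_pos h1']; nlinarith
          · rw [if_neg h1']
            by_cases h2' : γt * (pmax - pbar s) < ρ
            · rw [if_pos h2']; nlinarith
            · rw [if_neg h2']; push_neg at h2'; nlinarith
      have hsum : ∑ s, φ s *
          (if phat ≤ pbar s then ρ
           else if γt * (pmax - pbar s) < ρ then ρ + γt * (pmax - pbar s)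
           else 2 * ρ)
          ≤ ∑ s, φ s * ((ρ + γt * (pmax - pbar s)) * y s + ρ * (z1 s + z2 s)) :=
        Finset.sum_le_sum (fun s _ => mul_le_mul_of_nonneg_left (key s) (hφ0 s))
      linarith
end

section
/- Vertex representation of a two-piece lift: for the marginal support [p^0, p^2] with one breakpoint p^1, every point (ζ, L̄^1(ζ), L̄^2(ζ), L̂^1(ζ)) with ζ ∈ [p^0, p^2] \ {p^1} lies in the convex hull of the four lifted vertices corresponding to ζ ∈ {p^0, p^1⁻, p^1, p^2}, namely (p^0, p^0, 0, 0), (p^1, p^1, 0, 0), (p^1, p^1, 0, 1), and (p^2, p^1, p^2 − p^1, 1). -/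
/-!
On each side of the breakpoint the lift is affine in `ζ`: it is `ζ ↦ (ζ, ζ, 0, 0)` on `[p⁰, p¹)`
and `ζ ↦ (ζ, p¹, ζ - p¹, 1)` on `(p¹, p²]`. An affine map sends `[a, b]` onto the segment between
the images of `a` and `b`, so the lifted point lies on the edge joining the first two or the last
two vertices, which is a convex combination of all four with two zero weights.
-/

open Set

theorem exists_weights_of_mem_segment {𝕜 ι E : Type*} [Semiring 𝕜] [PartialOrder 𝕜]
    [IsOrderedRing 𝕜] [Fintype ι] [DecidableEq ι] [AddCommMonoid E] [Module 𝕜 E] (v : ι → E)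
    {i j : ι} {x : E} (hx : x ∈ segment 𝕜 (v i) (v j)) :
    ∃ l : ι → 𝕜, (∀ k, 0 ≤ l k) ∧ ∑ k, l k = 1 ∧ x = ∑ k, l k • v k := by
  obtain ⟨a, b, ha, hb, hab, rfl⟩ := hx
  refine ⟨Pi.single i a + Pi.single j b, ?_, ?_, ?_⟩
  · exact add_nonneg (α := ι → 𝕜) (Pi.single_nonneg.2 ha) (Pi.single_nonneg.2 hb)
  · simpa [Finset.sum_add_distrib] using hab
  · simp [add_smul, Finset.sum_add_distrib, Pi.single_apply, ite_smul]

theorem AffineMap.apply_mem_segment_of_mem_Icc {𝕜 E : Type*} [Field 𝕜] [LinearOrder 𝕜]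
    [IsStrictOrderedRing 𝕜] [AddCommGroup E] [Module 𝕜 E] (f : 𝕜 →ᵃ[𝕜] E) {a b t : 𝕜}
    (ht : t ∈ Icc a b) : f t ∈ segment 𝕜 (f a) (f b) := by
  rw [← image_segment, segment_eq_Icc (ht.1.trans ht.2)]
  exact mem_image_of_mem f ht

theorem stmt16_general
    (p0 p1 p2 : ℝ)
    (L1 L2 Lhat : ℝ → ℝ)
    (hL1 : ∀ ζ, L1 ζ = min ζ p1)
    (hL2 : ∀ ζ, L2 ζ = max (min ζ p2 - p1) 0)
    (hLhat : ∀ ζ, Lhat ζ = if p1 ≤ ζ then 1 else 0) :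
    ∀ ζ ∈ Set.Icc p0 p2, ζ ≠ p1 →
      ∃ l : Fin 4 → ℝ, (∀ i, 0 ≤ l i) ∧ (∑ i, l i = 1) ∧
        ((ζ, L1 ζ, L2 ζ, Lhat ζ) : ℝ × ℝ × ℝ × ℝ) =
          l 0 • ((p0, p0, 0, 0) : ℝ × ℝ × ℝ × ℝ) +
          l 1 • ((p1, p1, 0, 0) : ℝ × ℝ × ℝ × ℝ) +
          l 2 • ((p1, p1, 0, 1) : ℝ × ℝ × ℝ × ℝ) +
          l 3 • ((p2, p1, p2 - p1, 1) : ℝ × ℝ × ℝ × ℝ) := by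
  rintro ζ ⟨hζ0, hζ2⟩ hne
  let v : Fin 4 → ℝ × ℝ × ℝ × ℝ :=
    ![(p0, p0, 0, 0), (p1, p1, 0, 0), (p1, p1, 0, 1), (p2, p1, p2 - p1, 1)]
  suffices ∃ i j, (ζ, L1 ζ, L2 ζ, Lhat ζ) ∈ segment ℝ (v i) (v j) by
    obtain ⟨i, j, hseg⟩ := this
    obtain ⟨l, hl0, hl1, hl⟩ := exists_weights_of_mem_segment v hseg
    exact ⟨l, hl0, hl1, by simpa [Fin.sum_univ_four, v] using hl⟩
  rcases hne.lt_or_gt with hlt | hgt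
  · have hlift : ((ζ, L1 ζ, L2 ζ, Lhat ζ) : ℝ × ℝ × ℝ × ℝ) = (ζ, ζ, 0, 0) := by
      simp [hL1, hL2, hLhat, hlt.le, hζ2, not_le.2 hlt]
    have hseg := (AffineMap.lineMap (0 : ℝ × ℝ × ℝ × ℝ) (1, 1, 0, 0)).apply_mem_segment_of_mem_Icc
      ⟨hζ0, hlt.le⟩
    exact ⟨0, 1, by simpa [hlift, v, AffineMap.lineMap_apply_module'] using hseg⟩
  · have hlift : ((ζ, L1 ζ, L2 ζ, Lhat ζ) : ℝ × ℝ × ℝ × ℝ) = (ζ, p1, ζ - p1, 1) := by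
      simp [hL1, hL2, hLhat, hgt.le, hζ2]
    have hseg := (AffineMap.lineMap ((0, p1, -p1, 1) : ℝ × ℝ × ℝ × ℝ)
      (1, p1, 1 - p1, 1)).apply_mem_segment_of_mem_Icc ⟨hgt.le, hζ2⟩
    exact ⟨2, 3, by simpa [hlift, v, AffineMap.lineMap_apply_module', sub_eq_add_neg] using hseg⟩

/-- vertex representation of the two-piece lift: for
`ζ ∈ [p⁰, p²] \ {p¹}`, the lifted point `(ζ, L̄¹(ζ), L̄²(ζ), L̂¹(ζ))` is a
convex combination of the four lifted vertices
`(p⁰,p⁰,0,0), (p¹,p¹,0,0), (p¹,p¹,0,1), (p²,p¹,p²−p¹,1)`. -/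
theorem stmt16
    (p0 p1 p2 : ℝ) (hp0 : 0 ≤ p0) (h01 : p0 < p1) (h12 : p1 < p2)
    (L1 L2 Lhat : ℝ → ℝ)
    (hL1 : ∀ ζ, L1 ζ = min ζ p1)
    (hL2 : ∀ ζ, L2 ζ = max (min ζ p2 - p1) 0)
    (hLhat : ∀ ζ, Lhat ζ = if p1 ≤ ζ then 1 else 0) :
    ∀ ζ ∈ Set.Icc p0 p2, ζ ≠ p1 →
      ∃ l : Fin 4 → ℝ, (∀ i, 0 ≤ l i) ∧ (∑ i, l i = 1) ∧
        ((ζ, L1 ζ, L2 ζ, Lhat ζ) : ℝ × ℝ × ℝ × ℝ) =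
          l 0 • ((p0, p0, 0, 0) : ℝ × ℝ × ℝ × ℝ) +
          l 1 • ((p1, p1, 0, 0) : ℝ × ℝ × ℝ × ℝ) +
          l 2 • ((p1, p1, 0, 1) : ℝ × ℝ × ℝ × ℝ) +
          l 3 • ((p2, p1, p2 - p1, 1) : ℝ × ℝ × ℝ × ℝ) :=
  stmt16_general p0 p1 p2 L1 L2 Lhat hL1 hL2 hLhat
end
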